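/- arXiv:1910.12300 — 2 statements merged into one kernel-verified Lean document; each statement's English description precedes it below -/
import Mathlib

section
/- (Composition estimate) Let $\sigma, \rho > 0$, $u \in \mathcal{H}(\mathbb{T}^\infty_{\sigma+\rho}, X)$ and $\alpha \in \mathcal{H}(\mathbb{T}^\infty_\sigma, \ell^\infty)$ with $\|\alpha\|_\sigma \le \rho$. Then the composed function $f(\varphi) := u(\varphi + \alpha(\varphi))$ belongs to $\mathcal{H}(\mathbb{T}^\infty_\sigma, X)$ with $\|f\|_\sigma \le \|u\|_{\sigma+\rho}$. In particular the composition operator $\Phi_\alpha : u \mapsto u(\cdot + \alpha(\cdot))$ is a bounded linear map from $\mathcal{H}(\mathbb{T}^\infty_{\sigma+\rho}, X)$ to $\mathcal{H}(\mathbb{T}^\infty_\sigma, X)$ of operator norm at most $1$. -/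
/-!
Expanding `exp (i ℓ·α(φ))` in its power series and multiplying out the Fourier series of `α`
writes `u(φ + α(φ))` as an absolutely convergent sum over tuples `(ℓ, ℓ₁, …, ℓₙ)` of terms of
frequency `ℓ + ℓ₁ + ⋯ + ℓₙ`; regrouping by frequency gives the coefficients of `f`.
Since `|·|_η` is subadditive, the weight `e^{σ|ℓ + ℓ₁ + ⋯ + ℓₙ|_η}` is at most
`e^{σ|ℓ|_η} ∏ e^{σ|ℓᵢ|_η}`, so the weighted terms with fixed `ℓ` sum to at most
`e^{σ|ℓ|_η} ‖û(ℓ)‖ exp (∑ₘ e^{σ|m|_η} |ℓ·α̂(m)|) ≤ e^{σ|ℓ|_η} ‖û(ℓ)‖ e^{|ℓ|_η ‖α‖_σ}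
≤ e^{(σ+ρ)|ℓ|_η} ‖û(ℓ)‖`.
-/

open scoped BigOperators

/-- The weighted norm `|ℓ|_η = ∑_j ⟨j⟩^η |ℓ_j|` on finitely supported integer sequences. -/
noncomputable def wnorm (η : ℝ) (ℓ : ℕ →₀ ℤ) : ℝ :=
  ∑ j ∈ ℓ.support, ((j : ℝ) + 1) ^ η * |(ℓ j : ℝ)|

/-- The space `ℓ^∞(ℕ, ℂ)`. -/
abbrev Linf : Type := lp (fun _ : ℕ => ℂ) ⊤

/-- Evaluation of the `ℓ^∞`-valued Fourier series with coefficients `A` at a point `θ`. -/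
noncomputable def vecEval (A : (ℕ →₀ ℤ) → Linf) (θ : ℕ → ℂ) (j : ℕ) : ℂ :=
  ∑' ℓ : ℕ →₀ ℤ, (A ℓ : ℕ → ℂ) j *
    Complex.exp (Complex.I * ∑ k ∈ ℓ.support, (ℓ k : ℂ) * θ k)

/-- Membership in the thickened torus `𝕋^∞_σ`: `|Im θ_j| ≤ σ ⟨j⟩^η`. -/
def inTorus (η σ : ℝ) (θ : ℕ → ℂ) : Prop :=
  ∀ j : ℕ, |(θ j).im| ≤ σ * ((j : ℝ) + 1) ^ η

open scoped Nat

lemma wnorm_eq_sum_of_support_subset (η : ℝ) (ℓ : ℕ →₀ ℤ) {s : Finset ℕ} (hs : ℓ.support ⊆ s) :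
    wnorm η ℓ = ∑ j ∈ s, ((j : ℝ) + 1) ^ η * |(ℓ j : ℝ)| :=
  Finset.sum_subset hs fun j _ hj => by simp [Finsupp.notMem_support_iff.mp hj]

lemma wnorm_nonneg (η : ℝ) (ℓ : ℕ →₀ ℤ) : 0 ≤ wnorm η ℓ :=
  Finset.sum_nonneg fun _ _ => by positivity

lemma wnorm_add_le (η : ℝ) (k l : ℕ →₀ ℤ) : wnorm η (k + l) ≤ wnorm η k + wnorm η l := by
  classical
  rw [wnorm_eq_sum_of_support_subset η (k + l) Finsupp.support_add,
    wnorm_eq_sum_of_support_subset η k Finset.subset_union_left,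
    wnorm_eq_sum_of_support_subset η l Finset.subset_union_right, ← Finset.sum_add_distrib]
  refine Finset.sum_le_sum fun j _ => ?_
  rw [← mul_add, Finsupp.add_apply, Int.cast_add]
  gcongr
  exact abs_add_le _ _

lemma wnorm_sum_le (η : ℝ) {ι : Type*} (s : Finset ι) (m : ι → ℕ →₀ ℤ) :
    wnorm η (∑ i ∈ s, m i) ≤ ∑ i ∈ s, wnorm η (m i) :=
  Finset.le_sum_of_subadditive _ (by simp [wnorm]) (wnorm_add_le η) s m

lemma sum_abs_le_wnorm {η : ℝ} (hη : 0 ≤ η) (ℓ : ℕ →₀ ℤ) :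
    ∑ j ∈ ℓ.support, |(ℓ j : ℝ)| ≤ wnorm η ℓ :=
  Finset.sum_le_sum fun j _ => le_mul_of_one_le_left (abs_nonneg _)
    (Real.one_le_rpow (le_add_of_nonneg_left (Nat.cast_nonneg j)) hη)

lemma exp_mul_wnorm_add_sum_le {η σ : ℝ} (hσ : 0 ≤ σ) {ι : Type*} (s : Finset ι)
    (ℓ : ℕ →₀ ℤ) (m : ι → ℕ →₀ ℤ) :
    Real.exp (σ * wnorm η (ℓ + ∑ i ∈ s, m i)) ≤
      Real.exp (σ * wnorm η ℓ) * ∏ i ∈ s, Real.exp (σ * wnorm η (m i)) := by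
  rw [← Real.exp_sum, ← Real.exp_add, Real.exp_le_exp, ← Finset.mul_sum, ← mul_add]
  exact mul_le_mul_of_nonneg_left
    ((wnorm_add_le η _ _).trans (add_le_add le_rfl (wnorm_sum_le η s m))) hσ

noncomputable def torusChar (ℓ : ℕ →₀ ℤ) (θ : ℕ → ℂ) : ℂ :=
  Complex.exp (Complex.I * ∑ j ∈ ℓ.support, (ℓ j : ℂ) * θ j)

lemma torusChar_eq_of_support_subset (ℓ : ℕ →₀ ℤ) (θ : ℕ → ℂ) {s : Finset ℕ}
    (hs : ℓ.support ⊆ s) :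
    torusChar ℓ θ = Complex.exp (Complex.I * ∑ j ∈ s, (ℓ j : ℂ) * θ j) := by
  rw [torusChar, Finset.sum_subset hs fun j _ hj => by simp [Finsupp.notMem_support_iff.mp hj]]

lemma torusChar_add (k l : ℕ →₀ ℤ) (θ : ℕ → ℂ) :
    torusChar (k + l) θ = torusChar k θ * torusChar l θ := by
  classical
  rw [torusChar_eq_of_support_subset (k + l) θ Finsupp.support_add,
    torusChar_eq_of_support_subset k θ Finset.subset_union_left,
    torusChar_eq_of_support_subset l θ Finset.subset_union_right,
    ← Complex.exp_add, ← mul_add, ← Finset.sum_add_distrib]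
  simp only [Finsupp.add_apply, Int.cast_add, add_mul]

lemma torusChar_sum {ι : Type*} (s : Finset ι) (m : ι → ℕ →₀ ℤ) (θ : ℕ → ℂ) :
    torusChar (∑ i ∈ s, m i) θ = ∏ i ∈ s, torusChar (m i) θ := by
  classical
  induction s using Finset.induction_on with
  | empty => simp [torusChar]
  | insert a s ha ih => rw [Finset.sum_insert ha, Finset.prod_insert ha, torusChar_add, ih]

lemma torusChar_add_point (ℓ : ℕ →₀ ℤ) (θ θ' : ℕ → ℂ) :
    torusChar ℓ (θ + θ') = torusChar ℓ θ * torusChar ℓ θ' := by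
  simp only [torusChar, Pi.add_apply, mul_add, Finset.sum_add_distrib, Complex.exp_add]

lemma norm_torusChar_le {η σ : ℝ} {θ : ℕ → ℂ} (hθ : inTorus η σ θ) (ℓ : ℕ →₀ ℤ) :
    ‖torusChar ℓ θ‖ ≤ Real.exp (σ * wnorm η ℓ) := by
  rw [torusChar, Complex.norm_exp, Real.exp_le_exp, Finset.mul_sum, Complex.re_sum, wnorm,
    Finset.mul_sum]
  refine Finset.sum_le_sum fun j _ => ?_
  simp only [Complex.I_mul_re, Complex.mul_im, Complex.intCast_re, Complex.intCast_im, zero_mul,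
    add_zero]
  calc -((ℓ j : ℝ) * (θ j).im) ≤ |(ℓ j : ℝ)| * |(θ j).im| := by
        rw [← abs_mul]; exact neg_le_abs _
    _ ≤ |(ℓ j : ℝ)| * (σ * ((j : ℝ) + 1) ^ η) := by gcongr; exact hθ j
    _ = σ * (((j : ℝ) + 1) ^ η * |(ℓ j : ℝ)|) := by ring

section ExpSeries

variable {κ : Type*}

lemma summable_pi_prod {f : κ → ℝ} (hf0 : 0 ≤ f) (hf : Summable f) (n : ℕ) :
    Summable fun m : Fin n → κ => ∏ i, f (m i) := by
  induction n with
  | zero => exact .of_finite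
  | succ n ih =>
    rw [← (Fin.consEquiv fun _ => κ).summable_iff]
    refine (hf.mul_of_nonneg ih hf0 fun m => Finset.prod_nonneg fun i _ => hf0 _).congr
      fun x => ?_
    simp [Fin.prod_univ_succ]

lemma hasSum_pi_prod {𝕂 : Type*} [NormedField 𝕂] [CompleteSpace 𝕂] {q : κ → 𝕂}
    (hq : Summable fun m => ‖q m‖) (n : ℕ) :
    HasSum (fun m : Fin n → κ => ∏ i, q (m i)) ((∑' m, q m) ^ n) := by
  induction n with
  | zero => simp [hasSum_unique]
  | succ n ih =>
    have hnorm : Summable fun m : Fin n → κ => ‖∏ i, q (m i)‖ := by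
      simpa only [norm_prod] using summable_pi_prod (fun m => norm_nonneg (q m)) hq n
    have hprod : Summable fun x : κ × (Fin n → κ) => ‖q x.1 * ∏ i, q (x.2 i)‖ := by
      simpa only [norm_mul] using
        hq.mul_of_nonneg hnorm (fun _ => norm_nonneg _) fun _ => norm_nonneg _
    have hcons : (fun m : Fin (n + 1) → κ => ∏ i, q (m i)) ∘ Fin.consEquiv (fun _ => κ) =
        fun x => q x.1 * ∏ i, q (x.2 i) := by
      funext x
      simp [Fin.prod_univ_succ]
    rw [← (Fin.consEquiv fun _ => κ).hasSum_iff, hcons, pow_succ', ← ih.tsum_eq,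
      tsum_mul_tsum_of_summable_norm hq hnorm]
    exact hprod.of_norm.hasSum

theorem hasSum_sigma_prod_div_factorial {𝕂 : Type*} [RCLike 𝕂] {q : κ → 𝕂}
    (hq : Summable fun m => ‖q m‖) :
    HasSum (fun y : Σ n, Fin n → κ => (∏ i, q (y.2 i)) / (y.1 ! : 𝕂))
      (NormedSpace.exp (∑' m, q m)) := by
  have hnorm : Summable fun y : Σ n, Fin n → κ => ‖(∏ i, q (y.2 i)) / (y.1 ! : 𝕂)‖ := by
    have hfib (n : ℕ) : HasSum (fun m : Fin n → κ => (∏ i, ‖q (m i)‖) / n !)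
        ((∑' m, ‖q m‖) ^ n / n !) :=
      (hasSum_pi_prod (q := fun m => ‖q m‖) (by simpa using hq) n).div_const _
    refine (summable_sigma_of_nonneg fun _ => norm_nonneg _).2 ⟨fun n => ?_, ?_⟩
    · simpa [norm_prod] using (hfib n).summable
    · simpa [norm_prod, (hfib _).tsum_eq] using
        NormedSpace.expSeries_div_summable (∑' m, ‖q m‖)
  have hfib (n : ℕ) : HasSum (fun m : Fin n → κ => (∏ i, q (m i)) / n !)
      ((∑' m, q m) ^ n / n !) :=
    (hasSum_pi_prod hq n).div_const _
  have hsum := hnorm.of_norm.hasSum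
  rwa [← (hsum.sigma hfib).unique (NormedSpace.expSeries_div_hasSum_exp _)]

end ExpSeries

section Regrouping

variable {ι κ X : Type*} [NormedAddCommGroup X] {p : ι → κ} {T : ι → X}
  {w : κ → ℝ}

lemma mul_norm_tsum_fiber_le (hw : ∀ k, 0 < w k) (hT : Summable fun x => w (p x) * ‖T x‖)
    (k : κ) :
    w k * ‖∑' x : p ⁻¹' {k}, T x‖ ≤ ∑' x : p ⁻¹' {k}, w (p x) * ‖T x‖ := by
  have hfib (x : p ⁻¹' {k}) : w (p x) * ‖T x‖ = w k * ‖T x‖ := by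
    rw [show p x = k from x.2]
  have hnorm : Summable fun x : p ⁻¹' {k} => ‖T x‖ :=
    ((hT.subtype _).mul_left (w k)⁻¹).congr fun x => by
      rw [Function.comp_apply, hfib, inv_mul_cancel_left₀ (hw k).ne']
  rw [tsum_congr hfib, tsum_mul_left]
  exact mul_le_mul_of_nonneg_left (norm_tsum_le_tsum_norm hnorm) (hw k).le

lemma summable_mul_norm_tsum_fiber [CompleteSpace X] (hw : ∀ k, 0 < w k)
    (hT : Summable fun x => w (p x) * ‖T x‖) :
    Summable fun k => w k * ‖∑' x : p ⁻¹' {k}, T x‖ :=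
  (hT.hasSum.tsum_fiberwise p).summable.of_nonneg_of_le
    (fun k => mul_nonneg (hw k).le (norm_nonneg _)) (mul_norm_tsum_fiber_le hw hT)

lemma tsum_mul_norm_tsum_fiber_le [CompleteSpace X] (hw : ∀ k, 0 < w k)
    (hT : Summable fun x => w (p x) * ‖T x‖) :
    ∑' k, w k * ‖∑' x : p ⁻¹' {k}, T x‖ ≤ ∑' x, w (p x) * ‖T x‖ :=
  ((summable_mul_norm_tsum_fiber hw hT).tsum_le_tsum (mul_norm_tsum_fiber_le hw hT)
    (hT.hasSum.tsum_fiberwise p).summable).trans_eq (hT.hasSum.tsum_fiberwise p).tsum_eq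

lemma tsum_smul_eq_tsum_smul_tsum_fiber {𝕜 : Type*} [NormedField 𝕜] [NormedSpace 𝕜 X]
    [CompleteSpace X] (hT : Summable fun x => w (p x) * ‖T x‖) {χ : κ → 𝕜}
    (hχ : ∀ k, ‖χ k‖ ≤ w k) :
    ∑' x, χ (p x) • T x = ∑' k, χ k • ∑' x : p ⁻¹' {k}, T x := by
  have hV : Summable fun x => χ (p x) • T x :=
    hT.of_norm_bounded fun x =>
      (norm_smul_le _ _).trans (mul_le_mul_of_nonneg_right (hχ _) (norm_nonneg _))
  rw [← (hV.hasSum.tsum_fiberwise p).tsum_eq]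
  refine tsum_congr fun k => ?_
  rw [← tsum_const_smul'']
  exact tsum_congr fun x => by rw [show p x = k from x.2]

end Regrouping

section Composition

variable {X : Type*} [NormedAddCommGroup X] {η σ ρ : ℝ}
  {u : (ℕ →₀ ℤ) → X} {A : (ℕ →₀ ℤ) → Linf}

/-- The paper's `ℓ · α̂(m)`. -/
noncomputable def dotCoeff (A : (ℕ →₀ ℤ) → Linf) (ℓ m : ℕ →₀ ℤ) : ℂ :=
  ∑ j ∈ ℓ.support, (ℓ j : ℂ) * (A m : ℕ → ℂ) j

lemma norm_dotCoeff_le (A : (ℕ →₀ ℤ) → Linf) (ℓ m : ℕ →₀ ℤ) :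
    ‖dotCoeff A ℓ m‖ ≤ (∑ j ∈ ℓ.support, |(ℓ j : ℝ)|) * ‖A m‖ := by
  rw [Finset.sum_mul]
  refine (norm_sum_le _ _).trans (Finset.sum_le_sum fun j _ => ?_)
  rw [norm_mul, Complex.norm_intCast]
  exact mul_le_mul_of_nonneg_left (lp.norm_apply_le_norm ENNReal.top_ne_zero (A m) j)
    (abs_nonneg _)

lemma weighted_norm_dotCoeff_le (A : (ℕ →₀ ℤ) → Linf) (ℓ m : ℕ →₀ ℤ) :
    Real.exp (σ * wnorm η m) * ‖dotCoeff A ℓ m‖ ≤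
      (∑ j ∈ ℓ.support, |(ℓ j : ℝ)|) * (Real.exp (σ * wnorm η m) * ‖A m‖) := by
  rw [mul_left_comm]
  exact mul_le_mul_of_nonneg_left (norm_dotCoeff_le A ℓ m) (Real.exp_pos _).le

lemma summable_weighted_dotCoeff (hA : Summable fun m => Real.exp (σ * wnorm η m) * ‖A m‖)
    (ℓ : ℕ →₀ ℤ) : Summable fun m => Real.exp (σ * wnorm η m) * ‖dotCoeff A ℓ m‖ :=
  (hA.mul_left _).of_nonneg_of_le (fun _ => by positivity) (weighted_norm_dotCoeff_le A ℓ)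

lemma tsum_weighted_dotCoeff_le (hη : 0 ≤ η)
    (hA : Summable fun m => Real.exp (σ * wnorm η m) * ‖A m‖)
    (hAρ : ∑' m, Real.exp (σ * wnorm η m) * ‖A m‖ ≤ ρ) (ℓ : ℕ →₀ ℤ) :
    ∑' m, Real.exp (σ * wnorm η m) * ‖dotCoeff A ℓ m‖ ≤ ρ * wnorm η ℓ :=
  calc ∑' m, Real.exp (σ * wnorm η m) * ‖dotCoeff A ℓ m‖
      ≤ ∑' m, (∑ j ∈ ℓ.support, |(ℓ j : ℝ)|) * (Real.exp (σ * wnorm η m) * ‖A m‖) :=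
        (summable_weighted_dotCoeff hA ℓ).tsum_le_tsum (weighted_norm_dotCoeff_le A ℓ)
          (hA.mul_left _)
    _ = (∑ j ∈ ℓ.support, |(ℓ j : ℝ)|) * ∑' m, Real.exp (σ * wnorm η m) * ‖A m‖ :=
        tsum_mul_left
    _ ≤ wnorm η ℓ * ρ :=
        mul_le_mul (sum_abs_le_wnorm hη ℓ) hAρ (tsum_nonneg fun _ => by positivity)
          (wnorm_nonneg η ℓ)
    _ = ρ * wnorm η ℓ := mul_comm _ _

lemma sum_mul_vecEval {θ : ℕ → ℂ} (hA : Summable fun m => Real.exp (σ * wnorm η m) * ‖A m‖)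
    (hθ : inTorus η σ θ) (ℓ : ℕ →₀ ℤ) :
    ∑ j ∈ ℓ.support, (ℓ j : ℂ) * vecEval A θ j = ∑' m, dotCoeff A ℓ m * torusChar m θ := by
  have hj (j : ℕ) : Summable fun m => (A m : ℕ → ℂ) j * torusChar m θ :=
    hA.of_norm_bounded fun m => by
      rw [norm_mul, mul_comm]
      exact mul_le_mul (norm_torusChar_le hθ m)
        (lp.norm_apply_le_norm ENNReal.top_ne_zero _ _) (norm_nonneg _) (Real.exp_pos _).le
  simp_rw [dotCoeff, Finset.sum_mul, mul_assoc]
  rw [Summable.tsum_finsetSum fun j _ => (hj j).mul_left _]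
  simp_rw [tsum_mul_left]
  rfl

/-- `(ℓ, n, (ℓ₁, …, ℓₙ))` indexes the summand of the paper's formula for `f̂(k)` with
`ℓ + ℓ₁ + ⋯ + ℓₙ = k`. -/
abbrev ExpansionIndex : Type := (ℕ →₀ ℤ) × Σ n : ℕ, Fin n → ℕ →₀ ℤ

noncomputable def expansionFreq (x : ExpansionIndex) : ℕ →₀ ℤ := x.1 + ∑ i, x.2.2 i

noncomputable def expansionTerm [NormedSpace ℂ X] (u : (ℕ →₀ ℤ) → X) (A : (ℕ →₀ ℤ) → Linf)
    (x : ExpansionIndex) : X :=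
  ((∏ i, Complex.I * dotCoeff A x.1 (x.2.2 i)) / (x.2.1 ! : ℂ)) • u x.1

noncomputable def expansionMajorant (η σ : ℝ) (u : (ℕ →₀ ℤ) → X) (A : (ℕ →₀ ℤ) → Linf)
    (x : ExpansionIndex) : ℝ :=
  Real.exp (σ * wnorm η x.1) * ‖u x.1‖ *
    ((∏ i, Real.exp (σ * wnorm η (x.2.2 i)) * ‖dotCoeff A x.1 (x.2.2 i)‖) / x.2.1 !)

lemma expansionMajorant_nonneg (x : ExpansionIndex) : 0 ≤ expansionMajorant η σ u A x := by
  unfold expansionMajorant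
  positivity

lemma weighted_norm_expansionTerm_le [NormedSpace ℂ X] (hσ : 0 ≤ σ) (x : ExpansionIndex) :
    Real.exp (σ * wnorm η (expansionFreq x)) * ‖expansionTerm u A x‖ ≤
      expansionMajorant η σ u A x := by
  obtain ⟨ℓ, n, m⟩ := x
  have hT : ‖expansionTerm u A (ℓ, ⟨n, m⟩)‖ = (∏ i, ‖dotCoeff A ℓ (m i)‖) / n ! * ‖u ℓ‖ := by
    simp [expansionTerm, norm_smul, norm_prod]
  calc _ ≤ (Real.exp (σ * wnorm η ℓ) * ∏ i, Real.exp (σ * wnorm η (m i))) *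
        ‖expansionTerm u A (ℓ, ⟨n, m⟩)‖ :=
        mul_le_mul_of_nonneg_right (exp_mul_wnorm_add_sum_le hσ _ ℓ m) (norm_nonneg _)
    _ = _ := by
        rw [hT, expansionMajorant, Finset.prod_mul_distrib]
        ring

lemma hasSum_expansionMajorant_fiber
    (hA : Summable fun m => Real.exp (σ * wnorm η m) * ‖A m‖) (ℓ : ℕ →₀ ℤ) :
    HasSum (fun y => expansionMajorant η σ u A (ℓ, y))
      (Real.exp (σ * wnorm η ℓ) * ‖u ℓ‖ *
        Real.exp (∑' m, Real.exp (σ * wnorm η m) * ‖dotCoeff A ℓ m‖)) := by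
  have hsum := hasSum_sigma_prod_div_factorial
    (q := fun m => Real.exp (σ * wnorm η m) * ‖dotCoeff A ℓ m‖)
    (by simpa [abs_mul] using summable_weighted_dotCoeff hA ℓ)
  rw [← Real.exp_eq_exp_ℝ] at hsum
  exact hsum.mul_left _

lemma exp_mul_wnorm_mul_exp_le (hη : 0 ≤ η)
    (hA : Summable fun m => Real.exp (σ * wnorm η m) * ‖A m‖)
    (hAρ : ∑' m, Real.exp (σ * wnorm η m) * ‖A m‖ ≤ ρ) (ℓ : ℕ →₀ ℤ) :
    Real.exp (σ * wnorm η ℓ) * ‖u ℓ‖ *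
        Real.exp (∑' m, Real.exp (σ * wnorm η m) * ‖dotCoeff A ℓ m‖) ≤
      Real.exp ((σ + ρ) * wnorm η ℓ) * ‖u ℓ‖ := by
  rw [add_mul, Real.exp_add, mul_right_comm]
  gcongr
  exact tsum_weighted_dotCoeff_le hη hA hAρ ℓ

lemma summable_expansionMajorant (hη : 0 ≤ η)
    (hu : Summable fun ℓ => Real.exp ((σ + ρ) * wnorm η ℓ) * ‖u ℓ‖)
    (hA : Summable fun m => Real.exp (σ * wnorm η m) * ‖A m‖)
    (hAρ : ∑' m, Real.exp (σ * wnorm η m) * ‖A m‖ ≤ ρ) :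
    Summable (expansionMajorant η σ u A) :=
  (summable_prod_of_nonneg fun x => expansionMajorant_nonneg x).2
    ⟨fun ℓ => (hasSum_expansionMajorant_fiber hA ℓ).summable,
      hu.of_nonneg_of_le (fun _ => tsum_nonneg fun _ => expansionMajorant_nonneg _) fun ℓ =>
        (hasSum_expansionMajorant_fiber hA ℓ).tsum_eq.trans_le
          (exp_mul_wnorm_mul_exp_le hη hA hAρ ℓ)⟩

lemma tsum_expansionMajorant_le (hη : 0 ≤ η)
    (hu : Summable fun ℓ => Real.exp ((σ + ρ) * wnorm η ℓ) * ‖u ℓ‖)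
    (hA : Summable fun m => Real.exp (σ * wnorm η m) * ‖A m‖)
    (hAρ : ∑' m, Real.exp (σ * wnorm η m) * ‖A m‖ ≤ ρ) :
    ∑' x, expansionMajorant η σ u A x ≤ ∑' ℓ, Real.exp ((σ + ρ) * wnorm η ℓ) * ‖u ℓ‖ := by
  have hsum := (summable_expansionMajorant hη hu hA hAρ).hasSum.prod_fiberwise
    (hasSum_expansionMajorant_fiber hA)
  rw [← hsum.tsum_eq]
  exact hsum.summable.tsum_le_tsum (exp_mul_wnorm_mul_exp_le hη hA hAρ) hu

lemma torusChar_smul_expansionTerm [NormedSpace ℂ X] (θ : ℕ → ℂ) (ℓ : ℕ →₀ ℤ) (n : ℕ)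
    (m : Fin n → ℕ →₀ ℤ) :
    torusChar (expansionFreq (ℓ, ⟨n, m⟩)) θ • expansionTerm u A (ℓ, ⟨n, m⟩) =
      (torusChar ℓ θ *
        ((∏ i, Complex.I * dotCoeff A ℓ (m i) * torusChar (m i) θ) / (n ! : ℂ))) • u ℓ := by
  rw [expansionTerm, smul_smul, expansionFreq, torusChar_add, torusChar_sum]
  congr 1
  simp only [Finset.prod_mul_distrib]
  ring

lemma torusChar_vecEval {θ : ℕ → ℂ} (hA : Summable fun m => Real.exp (σ * wnorm η m) * ‖A m‖)
    (hθ : inTorus η σ θ) (ℓ : ℕ →₀ ℤ) :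
    torusChar ℓ (vecEval A θ) =
      NormedSpace.exp (∑' m, Complex.I * dotCoeff A ℓ m * torusChar m θ) := by
  rw [torusChar, sum_mul_vecEval hA hθ, ← tsum_mul_left, Complex.exp_eq_exp_ℂ]
  simp_rw [mul_assoc]

lemma tsum_torusChar_smul_expansionTerm [NormedSpace ℂ X] [CompleteSpace X] {θ : ℕ → ℂ}
    (hA : Summable fun m => Real.exp (σ * wnorm η m) * ‖A m‖) (hθ : inTorus η σ θ)
    (hT : Summable fun x => Real.exp (σ * wnorm η (expansionFreq x)) * ‖expansionTerm u A x‖) :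
    ∑' x, torusChar (expansionFreq x) θ • expansionTerm u A x =
      ∑' ℓ, torusChar ℓ (θ + vecEval A θ) • u ℓ := by
  have hV : Summable fun x => torusChar (expansionFreq x) θ • expansionTerm u A x :=
    hT.of_norm_bounded fun x => (norm_smul_le _ _).trans
      (mul_le_mul_of_nonneg_right (norm_torusChar_le hθ _) (norm_nonneg _))
  refine ((hV.hasSum.prod_fiberwise fun ℓ => ?_).tsum_eq).symm
  have hq : Summable fun m => ‖Complex.I * dotCoeff A ℓ m * torusChar m θ‖ :=
    (summable_weighted_dotCoeff hA ℓ).of_nonneg_of_le (fun _ => norm_nonneg _) fun m => by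
      rw [norm_mul, norm_mul, Complex.norm_I, one_mul, mul_comm]
      exact mul_le_mul_of_nonneg_right (norm_torusChar_le hθ m) (norm_nonneg _)
  rw [torusChar_add_point, torusChar_vecEval hA hθ]
  convert ((hasSum_sigma_prod_div_factorial hq).mul_left (torusChar ℓ θ)).smul_const (u ℓ)
    using 1
  funext ⟨n, m⟩
  exact torusChar_smul_expansionTerm θ ℓ n m

end Composition

theorem stmt6_general {X : Type*} [NormedAddCommGroup X] [NormedSpace ℂ X] [CompleteSpace X]
    (η σ ρ : ℝ) (hη : 0 < η) (hσ : 0 < σ)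
    (u : (ℕ →₀ ℤ) → X)
    (hu : Summable fun ℓ : ℕ →₀ ℤ => Real.exp ((σ + ρ) * wnorm η ℓ) * ‖u ℓ‖)
    (A : (ℕ →₀ ℤ) → Linf)
    (hA : Summable fun ℓ : ℕ →₀ ℤ => Real.exp (σ * wnorm η ℓ) * ‖A ℓ‖)
    (hAρ : (∑' ℓ : ℕ →₀ ℤ, Real.exp (σ * wnorm η ℓ) * ‖A ℓ‖) ≤ ρ) :
    ∃ c : (ℕ →₀ ℤ) → X,
      (Summable fun k : ℕ →₀ ℤ => Real.exp (σ * wnorm η k) * ‖c k‖) ∧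
      (∑' k : ℕ →₀ ℤ, Real.exp (σ * wnorm η k) * ‖c k‖) ≤
        (∑' ℓ : ℕ →₀ ℤ, Real.exp ((σ + ρ) * wnorm η ℓ) * ‖u ℓ‖) ∧
      ∀ θ : ℕ → ℂ, inTorus η σ θ →
        (∑' ℓ : ℕ →₀ ℤ, Complex.exp (Complex.I * ∑ j ∈ ℓ.support,
            (ℓ j : ℂ) * (θ j + vecEval A θ j)) • u ℓ) =
          ∑' k : ℕ →₀ ℤ, Complex.exp (Complex.I * ∑ j ∈ k.support,
            (k j : ℂ) * θ j) • c k := by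
  have hM := summable_expansionMajorant hη.le hu hA hAρ
  have hT : Summable fun x => Real.exp (σ * wnorm η (expansionFreq x)) * ‖expansionTerm u A x‖ :=
    hM.of_nonneg_of_le (fun _ => by positivity) (weighted_norm_expansionTerm_le hσ.le)
  have hTle := (hT.tsum_le_tsum (weighted_norm_expansionTerm_le hσ.le) hM).trans
    (tsum_expansionMajorant_le hη.le hu hA hAρ)
  have hw (k : ℕ →₀ ℤ) : 0 < Real.exp (σ * wnorm η k) := Real.exp_pos _
  refine ⟨fun k => ∑' x : expansionFreq ⁻¹' {k}, expansionTerm u A x,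
    summable_mul_norm_tsum_fiber hw hT, (tsum_mul_norm_tsum_fiber_le hw hT).trans hTle,
    fun θ hθ => (tsum_torusChar_smul_expansionTerm hA hθ hT).symm.trans
      (tsum_smul_eq_tsum_smul_tsum_fiber (w := fun k => Real.exp (σ * wnorm η k)) hT
        (norm_torusChar_le hθ))⟩

/-- Composition estimate: if `u ∈ 𝓗(𝕋^∞_{σ+ρ}, X)` and
`α ∈ 𝓗(𝕋^∞_σ, ℓ^∞)` with `‖α‖_σ ≤ ρ`, then `f(φ) = u(φ + α(φ))` belongs to
`𝓗(𝕋^∞_σ, X)` with `‖f‖_σ ≤ ‖u‖_{σ+ρ}`: there are Fourier coefficients `c` with the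
stated norm bound whose series represents `u(φ + α(φ))` on `𝕋^∞_σ`. -/
theorem stmt6 {X : Type*} [NormedAddCommGroup X] [NormedSpace ℂ X] [CompleteSpace X]
    (η σ ρ : ℝ) (hη : 0 < η) (hσ : 0 < σ) (hρ : 0 < ρ)
    (u : (ℕ →₀ ℤ) → X)
    (hu : Summable fun ℓ : ℕ →₀ ℤ => Real.exp ((σ + ρ) * wnorm η ℓ) * ‖u ℓ‖)
    (A : (ℕ →₀ ℤ) → Linf)
    (hA : Summable fun ℓ : ℕ →₀ ℤ => Real.exp (σ * wnorm η ℓ) * ‖A ℓ‖)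
    (hAρ : (∑' ℓ : ℕ →₀ ℤ, Real.exp (σ * wnorm η ℓ) * ‖A ℓ‖) ≤ ρ) :
    ∃ c : (ℕ →₀ ℤ) → X,
      (Summable fun k : ℕ →₀ ℤ => Real.exp (σ * wnorm η k) * ‖c k‖) ∧
      (∑' k : ℕ →₀ ℤ, Real.exp (σ * wnorm η k) * ‖c k‖) ≤
        (∑' ℓ : ℕ →₀ ℤ, Real.exp ((σ + ρ) * wnorm η ℓ) * ‖u ℓ‖) ∧
      ∀ θ : ℕ → ℂ, inTorus η σ θ →
        (∑' ℓ : ℕ →₀ ℤ, Complex.exp (Complex.I * ∑ j ∈ ℓ.support,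
            (ℓ j : ℂ) * (θ j + vecEval A θ j)) • u ℓ) =
          ∑' k : ℕ →₀ ℤ, Complex.exp (Complex.I * ∑ j ∈ k.support,
            (k j : ℂ) * θ j) • c k :=
  stmt6_general η σ ρ hη hσ u hu A hA hAρ
end

section
/- (Weighted small-divisor series convergence) Let $\mu_1, \mu_2 > 3$ and define $\mathtt{d}(\ell) := \prod_{i\in\mathbb{N}}(1+\langle i\rangle^{\mu_1}|\ell_i|^{\mu_2})$ for finitely supported integer sequences $\ell$. Then $\sum_{\ell \in \mathbb{Z}^\infty_*} \frac{\|\ell\|_1^2}{\mathtt{d}(\ell)} < \infty$, where $\|\ell\|_1 = \sum_i |\ell_i|$. -/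
/-! On the support of `ℓ` every `|ℓ i|` is at least `1`, so `‖ℓ‖₁ ≤ ∏ (1 + |ℓ i|) ≤ ∏ 2|ℓ i|`,
and the summand is dominated by `∏_{ℓ i ≠ 0} F (i, ℓ i)` with `F (i, k) = 4 (i+1)^{-μ₁} |k|^{2-μ₂}`,
a summable function on `ℕ × ℤ`. Identifying `ℓ` with its graph, a finite subset of `ℕ × ℤ`, such
products are summable because `∑_{s ∈ T} ∏_{p ∈ s} F p ≤ exp (∑ F)` for every finite family `T`. -/

open Finset

theorem Finset.sum_le_prod_one_add {ι R : Type*} [CommSemiring R] [PartialOrder R]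
    [IsOrderedRing R] (s : Finset ι) {f : ι → R} (hf : ∀ i ∈ s, 0 ≤ f i) :
    ∑ i ∈ s, f i ≤ ∏ i ∈ s, (1 + f i) := by
  classical
  rw [prod_one_add]
  calc ∑ i ∈ s, f i = ∑ t ∈ s.map ⟨singleton, singleton_injective⟩, ∏ i ∈ t, f i := by simp
    _ ≤ ∑ t ∈ s.powerset, ∏ i ∈ t, f i :=
      sum_le_sum_of_subset_of_nonneg (by simp [subset_iff])
        fun t ht _ => prod_nonneg fun i hi => hf i (mem_powerset.1 ht hi)

/-- The graph `ℓ ↦ {(i, ℓ i) | ℓ i ≠ 0}` embeds `ι →₀ M` into `Finset (ι × M)`. -/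
theorem summable_finsuppProd_of_summable_nonneg {ι M : Type*} [Zero M] {f : ι × M → ℝ}
    (hf : ∀ p, 0 ≤ f p) (hfs : Summable f) :
    Summable fun ℓ : ι →₀ M => ∏ i ∈ ℓ.support, f (i, ℓ i) := by
  have h := (summable_finsetProd_of_summable_nonneg hf hfs).comp_injective
    (Finsupp.graph_injective ι M)
  simp only [Function.comp_def, Finsupp.graph, prod_map] at h
  exact h

theorem div_one_add_mul_rpow_le {x a μ : ℝ} (hx : 1 ≤ x) (ha : 0 < a) :
    (1 + x) ^ 2 / (1 + a * x ^ μ) ≤ 4 * a⁻¹ * x ^ (2 - μ) := by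
  have hx0 : 0 < x := one_pos.trans_le hx
  calc (1 + x) ^ 2 / (1 + a * x ^ μ) ≤ 4 * x ^ 2 / (a * x ^ μ) := by
        gcongr
        · nlinarith
        · linarith
    _ = 4 * a⁻¹ * x ^ (2 - μ) := by
        rw [Real.rpow_sub hx0, Real.rpow_two]
        field_simp

theorem sq_sum_div_prod_one_add_mul_rpow_le {ι : Type*} (s : Finset ι) {x a : ι → ℝ} (μ : ℝ)
    (hx : ∀ i ∈ s, 1 ≤ x i) (ha : ∀ i ∈ s, 0 < a i) :
    (∑ i ∈ s, x i) ^ 2 / ∏ i ∈ s, (1 + a i * x i ^ μ) ≤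
      ∏ i ∈ s, 4 * (a i)⁻¹ * x i ^ (2 - μ) := by
  have hx0 : ∀ i ∈ s, 0 ≤ x i := fun i hi => zero_le_one.trans (hx i hi)
  have hden : ∀ i ∈ s, 0 < 1 + a i * x i ^ μ := fun i hi => by
    have := ha i hi; have := hx0 i hi; positivity
  have hnum : (∑ i ∈ s, x i) ^ 2 ≤ ∏ i ∈ s, (1 + x i) ^ 2 := by
    rw [prod_pow]
    gcongr
    · exact sum_nonneg hx0
    · exact s.sum_le_prod_one_add hx0
  calc (∑ i ∈ s, x i) ^ 2 / ∏ i ∈ s, (1 + a i * x i ^ μ)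
      ≤ (∏ i ∈ s, (1 + x i) ^ 2) / ∏ i ∈ s, (1 + a i * x i ^ μ) := by
        gcongr
        exact prod_nonneg fun i hi => (hden i hi).le
    _ = ∏ i ∈ s, (1 + x i) ^ 2 / (1 + a i * x i ^ μ) := (prod_div_distrib ..).symm
    _ ≤ ∏ i ∈ s, 4 * (a i)⁻¹ * x i ^ (2 - μ) :=
        prod_le_prod (fun i hi => div_nonneg (sq_nonneg _) (hden i hi).le)
          fun i hi => div_one_add_mul_rpow_le (hx i hi) (ha i hi)

theorem summable_mul_natSucc_rpow_mul_abs_int_rpow (c : ℝ) {μ ν : ℝ} (hμ : 1 < μ) (hν : 1 < ν) :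
    Summable fun p : ℕ × ℤ => c * ((p.1 : ℝ) + 1) ^ (-μ) * |(p.2 : ℝ)| ^ (-ν) := by
  have hi : Summable fun i : ℕ => ((i : ℝ) + 1) ^ (-μ) := by
    simpa using (summable_nat_add_iff 1).2 (Real.summable_nat_rpow.2 (neg_lt_neg hμ))
  simpa [mul_assoc] using (hi.mul_of_nonneg (Real.summable_abs_int_rpow hν)
    (fun i => by positivity) fun k => by positivity).mul_left c

/-- Weighted small-divisor series convergence: for `μ₁, μ₂ > 3`,
`∑_{ℓ ∈ ℤ^∞_*} ‖ℓ‖₁² / 𝚍(ℓ) < ∞` where `𝚍(ℓ) = ∏_i (1 + ⟨i⟩^{μ₁}|ℓ_i|^{μ₂})`. -/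
theorem stmt17 (μ₁ μ₂ : ℝ) (hμ₁ : 3 < μ₁) (hμ₂ : 3 < μ₂) :
    Summable (fun ℓ : ℕ →₀ ℤ =>
      (∑ i ∈ ℓ.support, |(ℓ i : ℝ)|) ^ 2 /
        ∏ i ∈ ℓ.support, (1 + ((i : ℝ) + 1) ^ μ₁ * |(ℓ i : ℝ)| ^ μ₂)) := by
  have hF : Summable fun p : ℕ × ℤ => 4 * ((p.1 : ℝ) + 1) ^ (-μ₁) * |(p.2 : ℝ)| ^ (2 - μ₂) := by
    simpa using summable_mul_natSucc_rpow_mul_abs_int_rpow 4 (μ := μ₁) (ν := μ₂ - 2)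
      (by linarith) (by linarith)
  have hmajorant : Summable fun ℓ : ℕ →₀ ℤ =>
      ∏ i ∈ ℓ.support, 4 * ((i : ℝ) + 1) ^ (-μ₁) * |(ℓ i : ℝ)| ^ (2 - μ₂) :=
    (summable_finsuppProd_of_summable_nonneg (fun p => by positivity) hF :)
  refine hmajorant.of_nonneg_of_le (fun ℓ => by positivity) fun ℓ => ?_
  simp_rw [Real.rpow_neg (Nat.cast_add_one_pos _).le]
  refine sq_sum_div_prod_one_add_mul_rpow_le _ μ₂ (fun i hi => ?_) fun i _ => by positivity
  rw [← Int.cast_abs]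
  exact_mod_cast Int.one_le_abs (Finsupp.mem_support_iff.1 hi)
end
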